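/- arXiv:2504.21704 — 5 statements merged into one kernel-verified Lean document; each statement's English description precedes it below -/
import Mathlib

section
/- Let ψ_1, …, ψ_N be linearly independent unit vectors in ℂ^d. Let H be the d×N matrix with columns ψ_1, …, ψ_N, let G := H*H, let W := HH* = Σ_{i=1}^N ψ_i ψ_i*, let M := H G⁻² H*, and let P := λ_max(M)⁻¹ · M, where λ_max(M) is the largest eigenvalue of the Hermitian matrix M. Then for every i ∈ {1,…,N}, Re⟨ψ_i, P ψ_i⟩ > 0 and 1 / Re⟨ψ_i, P ψ_i⟩ ≤ λ_max(W) / λ_min⁺(W). -/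
/-!
`Hᴴ M H = G G⁻² G = 1`, so `⟨ψᵢ, M ψᵢ⟩ = 1` and `⟨ψᵢ, P ψᵢ⟩ = 1 / λ_max(M)`; the claim becomes
`λ_max(M) ≤ λ_max(W) / λ_min⁺(W)`. Since `M W M = M` and `M = W (H G⁻³ Hᴴ)`, a unit eigenvector `v`
of `M` with eigenvalue `μ > 0` lies in the range of `W` and satisfies `μ² ⟨v, W v⟩ = μ`, whence
`μ λ_min⁺(W) ≤ μ ⟨v, W v⟩ = 1`. Finally `λ_max(W) ≥ ⟨ψᵢ, W ψᵢ⟩ = ∑ⱼ |⟨ψⱼ, ψᵢ⟩|² ≥ 1`.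
-/

open Matrix
open scoped ComplexOrder

namespace Matrix

section Gram

variable {R m n p : Type*} [CommRing R] [StarRing R] [Fintype m] [Fintype n]
  {H : Matrix m n R} {G : Matrix n n R}

lemma conjTranspose_mul_mul_of_eq (hG : G = Hᴴ * H) (X : Matrix n p R) :
    Hᴴ * (H * X) = G * X := by
  rw [hG, Matrix.mul_assoc]

variable [DecidableEq n]

lemma conjTranspose_mul_mul_inv_sq_mul_self (hG : G = Hᴴ * H) (hdet : IsUnit G.det) :
    Hᴴ * (H * (G⁻¹ * G⁻¹) * Hᴴ) * H = 1 := by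
  simp only [Matrix.mul_assoc, conjTranspose_mul_mul_of_eq hG, ← hG,
    mul_nonsing_inv_cancel_left _ _ hdet, nonsing_inv_mul _ hdet]

lemma mul_inv_sq_mul_conjTranspose_mul_self (hG : G = Hᴴ * H) (hdet : IsUnit G.det) :
    H * (G⁻¹ * G⁻¹) * Hᴴ * (H * Hᴴ) * (H * (G⁻¹ * G⁻¹) * Hᴴ) = H * (G⁻¹ * G⁻¹) * Hᴴ := by
  simp only [Matrix.mul_assoc, conjTranspose_mul_mul_of_eq hG,
    nonsing_inv_mul_cancel_left _ _ hdet, mul_nonsing_inv_cancel_left _ _ hdet]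

lemma mul_conjTranspose_mul_mul_inv_cube (hG : G = Hᴴ * H) (hdet : IsUnit G.det) :
    H * Hᴴ * (H * (G⁻¹ * (G⁻¹ * G⁻¹)) * Hᴴ) = H * (G⁻¹ * G⁻¹) * Hᴴ := by
  simp only [Matrix.mul_assoc, conjTranspose_mul_mul_of_eq hG,
    mul_nonsing_inv_cancel_left _ _ hdet]

end Gram

variable {𝕜 m n : Type*} [RCLike 𝕜] [Fintype n]

lemma re_star_dotProduct_self (x : n → 𝕜) :
    RCLike.re (star x ⬝ᵥ x) = ∑ j, ‖x j‖ ^ 2 := by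
  simp only [dotProduct, Pi.star_apply, RCLike.star_def, RCLike.conj_mul, ← RCLike.ofReal_pow,
    map_sum, RCLike.ofReal_re]

lemma norm_sq_le_re_star_dotProduct_self (x : n → 𝕜) (j : n) :
    ‖x j‖ ^ 2 ≤ RCLike.re (star x ⬝ᵥ x) := by
  rw [re_star_dotProduct_self]
  exact Finset.single_le_sum (fun k _ => sq_nonneg ‖x k‖) (Finset.mem_univ j)

lemma re_star_dotProduct_diagonal_mulVec [DecidableEq n] (d : n → ℝ) (x : n → 𝕜) :
    RCLike.re (star x ⬝ᵥ (diagonal (RCLike.ofReal ∘ d) *ᵥ x)) = ∑ j, d j * ‖x j‖ ^ 2 := by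
  simp only [dotProduct, mulVec_diagonal, Function.comp_apply, Pi.star_apply, RCLike.star_def,
    mul_left_comm _ (d _ : 𝕜), RCLike.conj_mul, ← RCLike.ofReal_pow, ← RCLike.ofReal_mul,
    map_sum, RCLike.ofReal_re]

lemma star_mulVec_dotProduct_mulVec [Fintype m] (A : Matrix m n 𝕜) (B : Matrix m m 𝕜)
    (x y : n → 𝕜) :
    star (A *ᵥ x) ⬝ᵥ (B *ᵥ (A *ᵥ y)) = star x ⬝ᵥ ((Aᴴ * B * A) *ᵥ y) := by
  rw [star_mulVec, mulVec_mulVec, ← dotProduct_mulVec, mulVec_mulVec, ← Matrix.mul_assoc]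

lemma star_col_dotProduct_mulVec_col [Fintype m] [DecidableEq n] (A : Matrix m n 𝕜)
    (B : Matrix m m 𝕜) (i j : n) :
    star (A.col i) ⬝ᵥ (B *ᵥ A.col j) = (Aᴴ * B * A) i j := by
  rw [← mulVec_single_one, ← mulVec_single_one, star_mulVec_dotProduct_mulVec, mulVec_single_one]
  simp [dotProduct, Pi.single_apply]

lemma star_dotProduct_mul_conjTranspose_mulVec [Fintype m] (A : Matrix n m 𝕜) (x : n → 𝕜) :
    star x ⬝ᵥ ((A * Aᴴ) *ᵥ x) = star (Aᴴ *ᵥ x) ⬝ᵥ (Aᴴ *ᵥ x) := by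
  rw [← mulVec_mulVec, dotProduct_mulVec, star_mulVec, conjTranspose_conjTranspose]

lemma norm_sq_star_col_dotProduct_le [Fintype m] (A : Matrix n m 𝕜) (i : m) (x : n → 𝕜) :
    ‖star (A.col i) ⬝ᵥ x‖ ^ 2 ≤ RCLike.re (star x ⬝ᵥ ((A * Aᴴ) *ᵥ x)) := by
  rw [star_dotProduct_mul_conjTranspose_mulVec]
  exact norm_sq_le_re_star_dotProduct_self (Aᴴ *ᵥ x) i

namespace IsHermitian

variable [DecidableEq n] {A : Matrix n n 𝕜} (hA : A.IsHermitian)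

lemma star_eigenvectorUnitary_mul_self :
    star (hA.eigenvectorUnitary : Matrix n n 𝕜) * A =
      diagonal (RCLike.ofReal ∘ hA.eigenvalues) * star (hA.eigenvectorUnitary : Matrix n n 𝕜) := by
  rw [← hA.conjStarAlgAut_star_eigenvectorUnitary, Unitary.conjStarAlgAut_star_apply,
    Matrix.mul_assoc _ (hA.eigenvectorUnitary : Matrix n n 𝕜),
    mem_unitaryGroup_iff.mp hA.eigenvectorUnitary.2, Matrix.mul_one]

lemma re_star_dotProduct_mulVec_self (x : n → 𝕜) :
    RCLike.re (star x ⬝ᵥ (A *ᵥ x)) =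
      ∑ j, hA.eigenvalues j * ‖(star (hA.eigenvectorUnitary : Matrix n n 𝕜) *ᵥ x) j‖ ^ 2 := by
  have hUU := mem_unitaryGroup_iff.mp hA.eigenvectorUnitary.2
  rw [← re_star_dotProduct_diagonal_mulVec, ← hA.conjStarAlgAut_star_eigenvectorUnitary,
    Unitary.conjStarAlgAut_star_apply, star_mulVec_dotProduct_mulVec, ← star_eq_conjTranspose,
    star_star, ← Matrix.mul_assoc, ← Matrix.mul_assoc, hUU, Matrix.one_mul, Matrix.mul_assoc, hUU,
    Matrix.mul_one]

lemma sum_norm_sq_star_eigenvectorUnitary_mulVec (x : n → 𝕜) :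
    ∑ j, ‖(star (hA.eigenvectorUnitary : Matrix n n 𝕜) *ᵥ x) j‖ ^ 2 =
      RCLike.re (star x ⬝ᵥ x) := by
  rw [← re_star_dotProduct_self, star_mulVec, ← dotProduct_mulVec, mulVec_mulVec,
    ← star_eq_conjTranspose, star_star, mem_unitaryGroup_iff.mp hA.eigenvectorUnitary.2,
    one_mulVec]

lemma re_star_dotProduct_mulVec_self_le_iSup_mul (x : n → 𝕜) :
    RCLike.re (star x ⬝ᵥ (A *ᵥ x)) ≤ (⨆ j, hA.eigenvalues j) * RCLike.re (star x ⬝ᵥ x) := by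
  rw [re_star_dotProduct_mulVec_self, ← hA.sum_norm_sq_star_eigenvectorUnitary_mulVec,
    Finset.mul_sum]
  gcongr with j
  exact le_ciSup (Finite.bddAbove_range _) j

lemma star_eigenvectorBasis_dotProduct_self (j : n) :
    star ⇑(hA.eigenvectorBasis j) ⬝ᵥ ⇑(hA.eigenvectorBasis j) = 1 := by
  rw [dotProduct_comm, ← EuclideanSpace.inner_eq_star_dotProduct, inner_self_eq_norm_sq_to_K,
    hA.eigenvectorBasis.orthonormal.1 j, RCLike.ofReal_one, one_pow]

noncomputable def minPosEigenvalue : ℝ := sInf {x : ℝ | 0 < x ∧ ∃ j, hA.eigenvalues j = x}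

lemma minPosEigenvalue_nonneg : 0 ≤ hA.minPosEigenvalue :=
  Real.sInf_nonneg fun _ hx => hx.1.le

lemma minPosEigenvalue_le {j : n} (hj : 0 < hA.eigenvalues j) :
    hA.minPosEigenvalue ≤ hA.eigenvalues j :=
  csInf_le ⟨0, fun _ hx => hx.1.le⟩ ⟨hj, j, rfl⟩

lemma minPosEigenvalue_pos (h : 0 < ⨆ j, hA.eigenvalues j) : 0 < hA.minPosEigenvalue := by
  obtain ⟨j, hj⟩ : ∃ j, 0 < hA.eigenvalues j := by
    by_contra! hle
    exact h.not_ge (Real.iSup_nonpos hle)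
  have hne : {x : ℝ | 0 < x ∧ ∃ j, hA.eigenvalues j = x}.Nonempty := ⟨_, hj, j, rfl⟩
  exact (hne.csInf_mem ((Set.finite_range hA.eigenvalues).subset fun _ hx => hx.2)).1

end IsHermitian

lemma PosSemidef.minPosEigenvalue_mul_le [DecidableEq n] {A : Matrix n n 𝕜} (hA : A.PosSemidef)
    {x : n → 𝕜} (hx : x ∈ Set.range A.mulVec) :
    hA.isHermitian.minPosEigenvalue * RCLike.re (star x ⬝ᵥ x) ≤
      RCLike.re (star x ⬝ᵥ (A *ᵥ x)) := by
  obtain ⟨y, rfl⟩ := hx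
  set U : Matrix n n 𝕜 := (hA.isHermitian.eigenvectorUnitary : Matrix n n 𝕜)
  -- `A y` has no component along the kernel of `A`
  have hcoord : ∀ j, (star U *ᵥ (A *ᵥ y)) j = hA.isHermitian.eigenvalues j * (star U *ᵥ y) j := by
    intro j
    rw [mulVec_mulVec, hA.isHermitian.star_eigenvectorUnitary_mul_self, ← mulVec_mulVec,
      mulVec_diagonal, Function.comp_apply]
  rw [hA.isHermitian.re_star_dotProduct_mulVec_self,
    ← hA.isHermitian.sum_norm_sq_star_eigenvectorUnitary_mulVec, Finset.mul_sum]
  refine Finset.sum_le_sum fun j _ => ?_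
  rcases (hA.eigenvalues_nonneg j).eq_or_lt with hj | hj
  · rw [hcoord, ← hj, RCLike.ofReal_zero, zero_mul, norm_zero]
    simp
  · exact mul_le_mul_of_nonneg_right (hA.isHermitian.minPosEigenvalue_le hj) (sq_nonneg _)

section GeneralizedInverse

variable [DecidableEq n] {M W K : Matrix n n 𝕜}

lemma mul_minPosEigenvalue_le_one_of_mulVec_eq_smul (hM : M.IsHermitian) (hW : W.PosSemidef)
    (hMWM : M * W * M = M) (hWK : W * K = M) {μ : ℝ} (hμ : 0 < μ) {v : n → 𝕜}
    (hv : M *ᵥ v = μ • v) (hv1 : star v ⬝ᵥ v = 1) :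
    μ * hW.isHermitian.minPosEigenvalue ≤ 1 := by
  have hrange : v ∈ Set.range W.mulVec := by
    refine ⟨(μ⁻¹ : ℝ) • (K *ᵥ v), ?_⟩
    rw [mulVec_smul, mulVec_mulVec, hWK, hv, smul_smul, inv_mul_cancel₀ hμ.ne', one_smul]
  have hquad : μ * RCLike.re (star v ⬝ᵥ (W *ᵥ v)) = 1 := by
    have h : star (M *ᵥ v) ⬝ᵥ (W *ᵥ (M *ᵥ v)) = star v ⬝ᵥ (M *ᵥ v) := by
      rw [star_mulVec_dotProduct_mulVec, hM.eq, hMWM]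
    rw [hv, star_smul, star_trivial, mulVec_smul, smul_dotProduct, dotProduct_smul,
      dotProduct_smul, hv1] at h
    have h' := congrArg RCLike.re h
    simp only [RCLike.smul_re, RCLike.one_re, mul_one] at h'
    exact mul_left_cancel₀ hμ.ne' (by rw [h', mul_one])
  have hbound := hW.minPosEigenvalue_mul_le hrange
  rw [hv1, RCLike.one_re, mul_one] at hbound
  calc μ * hW.isHermitian.minPosEigenvalue ≤ μ * RCLike.re (star v ⬝ᵥ (W *ᵥ v)) :=
        mul_le_mul_of_nonneg_left hbound hμ.le
    _ = 1 := hquad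

lemma IsHermitian.iSup_eigenvalues_mul_minPosEigenvalue_le_one (hM : M.IsHermitian)
    (hW : W.PosSemidef) (hMWM : M * W * M = M) (hWK : W * K = M) :
    (⨆ j, hM.eigenvalues j) * hW.isHermitian.minPosEigenvalue ≤ 1 := by
  rw [Real.iSup_mul_of_nonneg hW.isHermitian.minPosEigenvalue_nonneg]
  refine Real.iSup_le (fun j => ?_) zero_le_one
  rcases le_or_gt (hM.eigenvalues j) 0 with hj | hj
  · exact (mul_nonpos_of_nonpos_of_nonneg hj hW.isHermitian.minPosEigenvalue_nonneg).trans
      zero_le_one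
  · exact mul_minPosEigenvalue_le_one_of_mulVec_eq_smul hM hW hMWM hWK hj
      (hM.mulVec_eigenvectorBasis j) (hM.star_eigenvectorBasis_dotProduct_self j)

end GeneralizedInverse

end Matrix

theorem stmt_6 {d N : ℕ} (ψ : Fin N → (Fin d → ℂ))
    (hunit : ∀ i, star (ψ i) ⬝ᵥ ψ i = 1) (hli : LinearIndependent ℂ ψ)
    (H : Matrix (Fin d) (Fin N) ℂ) (hH : ∀ a i, H a i = ψ i a)
    (G : Matrix (Fin N) (Fin N) ℂ) (hG : G = Hᴴ * H)
    (W : Matrix (Fin d) (Fin d) ℂ) (hW : W = H * Hᴴ) (hWh : W.IsHermitian)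
    (M : Matrix (Fin d) (Fin d) ℂ) (hM : M = H * (G⁻¹ * G⁻¹) * Hᴴ) (hMh : M.IsHermitian)
    (P : Matrix (Fin d) (Fin d) ℂ) (hP : P = (⨆ i, hMh.eigenvalues i)⁻¹ • M) :
    ∀ i, 0 < (star (ψ i) ⬝ᵥ (P *ᵥ ψ i)).re ∧
      1 / (star (ψ i) ⬝ᵥ (P *ᵥ ψ i)).re ≤
        (⨆ j, hWh.eigenvalues j) /
          sInf {x : ℝ | 0 < x ∧ ∃ j, hWh.eigenvalues j = x} := by
  intro i
  have hcol : H.col = ψ := funext fun k => funext fun a => hH a k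
  have hdet : IsUnit G.det := by
    rw [hG, ← isUnit_iff_isUnit_det]
    exact (PosDef.conjTranspose_mul_self H (mulVec_injective_iff.mpr (hcol ▸ hli))).isUnit
  have hMψ : star (ψ i) ⬝ᵥ (M *ᵥ ψ i) = 1 := by
    rw [← hcol, star_col_dotProduct_mulVec_col, hM,
      conjTranspose_mul_mul_inv_sq_mul_self hG hdet, one_apply_eq]
  have hWψ := norm_sq_star_col_dotProduct_le H i (ψ i)
  rw [hcol, hunit, norm_one, one_pow, ← hW] at hWψ
  have hμ : 1 ≤ ⨆ j, hMh.eigenvalues j := by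
    simpa [hMψ, hunit] using hMh.re_star_dotProduct_mulVec_self_le_iSup_mul (ψ i)
  have hA : 1 ≤ ⨆ j, hWh.eigenvalues j := by
    simpa [hunit] using hWψ.trans (hWh.re_star_dotProduct_mulVec_self_le_iSup_mul (ψ i))
  have hm : 0 < hWh.minPosEigenvalue := hWh.minPosEigenvalue_pos (zero_lt_one.trans_le hA)
  have hμm : (⨆ j, hMh.eigenvalues j) * hWh.minPosEigenvalue ≤ 1 :=
    hMh.iSup_eigenvalues_mul_minPosEigenvalue_le_one (hW ▸ posSemidef_self_mul_conjTranspose H)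
      (by rw [hM, hW, mul_inv_sq_mul_conjTranspose_mul_self hG hdet])
      (by rw [hM, hW, mul_conjTranspose_mul_mul_inv_cube hG hdet])
  have hPψ : star (ψ i) ⬝ᵥ (P *ᵥ ψ i) = ((⨆ j, hMh.eigenvalues j)⁻¹ : ℝ) := by
    rw [hP, smul_mulVec, dotProduct_smul, hMψ]
    simp
  rw [hPψ, Complex.ofReal_re, one_div, inv_inv]
  exact ⟨inv_pos.mpr (zero_lt_one.trans_le hμ), (le_div_iff₀ hm).mpr (hμm.trans hA)⟩
end

section
/- Let N ≥ 2, let ε ≥ 0 satisfy N²ε < 1, let ψ_1, …, ψ_N be unit vectors in ℂ^d, and let e_1, …, e_N be an orthonormal family in ℂ^d such that ‖ψ_i ψ_i* − e_i e_i*‖ ≤ ε for every i, where ‖·‖ is the ℓ²→ℓ² operator norm on matrices. Then W := Σ_{i=1}^N ψ_i ψ_i* satisfies: every eigenvalue of W is at most 1 + Nε, and every nonzero eigenvalue of W is at least 1 − N²ε. Consequently λ_max(W)/λ_min⁺(W) ≤ (1 + Nε)/(1 − N²ε); in particular, if ε = 1/(2N²), then λ_max(W)/λ_min⁺(W) ≤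 3. -/
/-!
Let `v ≠ 0` satisfy `W v = λ v` and put `aᵢ = ⟪ψᵢ, v⟫`, so that `λ ‖v‖² = ∑ |aᵢ|²` and
`W v = ∑ aᵢ ψᵢ`.

Upper bound: `|aᵢ|² - |⟪eᵢ, v⟫|² = ⟪v, (ψᵢψᵢ* - eᵢeᵢ*) v⟫ ≤ ε ‖v‖²`, and Bessel's inequality
gives `∑ |⟪eᵢ, v⟫|² ≤ ‖v‖²`.

Lower bound: `(ψᵢψᵢ* - eᵢeᵢ*) ψᵢ = ψᵢ - ⟪eᵢ, ψᵢ⟫ eᵢ`, so each `ψᵢ` is within `ε` of the line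
through `eᵢ`, whence `|⟪ψᵢ, ψⱼ⟫| ≤ 2ε` for `i ≠ j`. The Gram matrix of the `ψᵢ` is then bounded
below by `1 - 2(N - 1)ε`, so `λ² ‖v‖² = ‖∑ aᵢ ψᵢ‖² ≥ (1 - 2(N - 1)ε) λ ‖v‖²`; finally
`2(N - 1) ≤ N²`.
-/

open Finset InnerProductSpace Matrix
open scoped InnerProductSpace

variable {𝕜 E ι : Type*} [RCLike 𝕜] [NormedAddCommGroup E] [InnerProductSpace 𝕜 E]
  {ψ e : ι → E} {ε : ℝ}

lemma inner_rankOne_self_apply (x v : E) :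
    ⟪v, rankOne 𝕜 x x v⟫_𝕜 = (‖⟪x, v⟫_𝕜‖ ^ 2 : 𝕜) := by
  rw [rankOne_apply, inner_smul_right, ← inner_conj_symm v x, RCLike.mul_conj]

lemma norm_inner_sq_sub_norm_inner_sq_le (x y v : E) :
    ‖⟪x, v⟫_𝕜‖ ^ 2 - ‖⟪y, v⟫_𝕜‖ ^ 2 ≤ ‖rankOne 𝕜 x x - rankOne 𝕜 y y‖ * ‖v‖ ^ 2 := by
  have hre : RCLike.re ⟪v, (rankOne 𝕜 x x - rankOne 𝕜 y y) v⟫_𝕜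
      = ‖⟪x, v⟫_𝕜‖ ^ 2 - ‖⟪y, v⟫_𝕜‖ ^ 2 := by
    rw [_root_.sub_apply, inner_sub_right, inner_rankOne_self_apply, inner_rankOne_self_apply, map_sub]
    simp only [← RCLike.ofReal_pow, RCLike.ofReal_re]
  calc ‖⟪x, v⟫_𝕜‖ ^ 2 - ‖⟪y, v⟫_𝕜‖ ^ 2
      = RCLike.re ⟪v, (rankOne 𝕜 x x - rankOne 𝕜 y y) v⟫_𝕜 := hre.symm
    _ ≤ ‖v‖ * ‖(rankOne 𝕜 x x - rankOne 𝕜 y y) v‖ := re_inner_le_norm ..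
    _ ≤ ‖rankOne 𝕜 x x - rankOne 𝕜 y y‖ * ‖v‖ ^ 2 := by
      nlinarith [(rankOne 𝕜 x x - rankOne 𝕜 y y).le_opNorm v, norm_nonneg v]

lemma norm_sub_inner_smul_le {x : E} (hx : ‖x‖ = 1) (y : E) :
    ‖x - ⟪y, x⟫_𝕜 • y‖ ≤ ‖rankOne 𝕜 x x - rankOne 𝕜 y y‖ := by
  have h := (rankOne 𝕜 x x - rankOne 𝕜 y y).le_opNorm x
  rwa [hx, mul_one, _root_.sub_apply, rankOne_apply, rankOne_apply, inner_self_eq_norm_sq_to_K, hx,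
    RCLike.ofReal_one, one_pow, one_smul] at h

lemma norm_inner_le_of_rankOne_close (hψ : ∀ i, ‖ψ i‖ = 1) (he : Orthonormal 𝕜 e)
    (hclose : ∀ i, ‖rankOne 𝕜 (ψ i) (ψ i) - rankOne 𝕜 (e i) (e i)‖ ≤ ε) {i j : ι}
    (hij : i ≠ j) :
    ‖⟪ψ i, ψ j⟫_𝕜‖ ≤ 2 * ε := by
  set r : ι → E := fun k => ψ k - ⟪e k, ψ k⟫_𝕜 • e k
  have hr : ∀ k, ‖r k‖ ≤ ε := fun k => (norm_sub_inner_smul_le (hψ k) (e k)).trans (hclose k)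
  have hψe : ⟪ψ i, e j⟫_𝕜 = ⟪r i, e j⟫_𝕜 := by
    simp only [r, inner_sub_left, inner_smul_left, he.inner_eq_zero hij, mul_zero, sub_zero]
  have hψψ : ⟪ψ i, ψ j⟫_𝕜 = ⟪ψ i, r j⟫_𝕜 + ⟪e j, ψ j⟫_𝕜 * ⟪r i, e j⟫_𝕜 := by
    simp only [r, inner_sub_right, inner_smul_right, ← hψe, sub_add_cancel]
  have h₁ : ‖⟪ψ i, r j⟫_𝕜‖ ≤ ε :=
    (norm_inner_le_norm _ _).trans (by rw [hψ i, one_mul]; exact hr j)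
  have h₂ : ‖⟪e j, ψ j⟫_𝕜‖ ≤ 1 :=
    (norm_inner_le_norm _ _).trans_eq (by rw [he.1 j, hψ j, one_mul])
  have h₃ : ‖⟪r i, e j⟫_𝕜‖ ≤ ε :=
    (norm_inner_le_norm _ _).trans (by rw [he.1 j, mul_one]; exact hr i)
  calc ‖⟪ψ i, ψ j⟫_𝕜‖ ≤ ‖⟪ψ i, r j⟫_𝕜‖ + ‖⟪e j, ψ j⟫_𝕜‖ * ‖⟪r i, e j⟫_𝕜‖ := by
        rw [hψψ, ← norm_mul]; exact norm_add_le _ _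
    _ ≤ ε + 1 * ε := by gcongr
    _ = 2 * ε := by ring

section Frame

variable [Fintype ι] {v : E} {μ : ℝ}

lemma inner_sum_rankOne_self_apply (ψ : ι → E) (v : E) :
    ⟪v, (∑ i, rankOne 𝕜 (ψ i) (ψ i)) v⟫_𝕜 = ((∑ i, ‖⟪ψ i, v⟫_𝕜‖ ^ 2 : ℝ) : 𝕜) := by
  simp only [_root_.sum_apply, inner_sum, inner_rankOne_self_apply, RCLike.ofReal_sum,
    RCLike.ofReal_pow]

lemma sum_norm_inner_sq_le (he : Orthonormal 𝕜 e)
    (hclose : ∀ i, ‖rankOne 𝕜 (ψ i) (ψ i) - rankOne 𝕜 (e i) (e i)‖ ≤ ε) (v : E) :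
    ∑ i, ‖⟪ψ i, v⟫_𝕜‖ ^ 2 ≤ (1 + Fintype.card ι * ε) * ‖v‖ ^ 2 := by
  have hterm : ∀ i, ‖⟪ψ i, v⟫_𝕜‖ ^ 2 ≤ ‖⟪e i, v⟫_𝕜‖ ^ 2 + ε * ‖v‖ ^ 2 := fun i => by
    nlinarith [norm_inner_sq_sub_norm_inner_sq_le (𝕜 := 𝕜) (ψ i) (e i) v, hclose i,
      sq_nonneg ‖v‖]
  calc ∑ i, ‖⟪ψ i, v⟫_𝕜‖ ^ 2 ≤ ∑ i, (‖⟪e i, v⟫_𝕜‖ ^ 2 + ε * ‖v‖ ^ 2) :=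
        sum_le_sum fun i _ => hterm i
    _ = ∑ i, ‖⟪e i, v⟫_𝕜‖ ^ 2 + Fintype.card ι * ε * ‖v‖ ^ 2 := by
      rw [sum_add_distrib, sum_const, card_univ, nsmul_eq_mul, mul_assoc]
    _ ≤ (1 + Fintype.card ι * ε) * ‖v‖ ^ 2 := by
      nlinarith [he.sum_inner_products_le (s := univ) v]

lemma sum_norm_sq_le_norm_sum_smul_sq (hψ : ∀ i, ‖ψ i‖ = 1) {δ : ℝ} (hδ : 0 ≤ δ)
    (hoff : ∀ i j, i ≠ j → ‖⟪ψ i, ψ j⟫_𝕜‖ ≤ δ) (c : ι → 𝕜) :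
    (1 - (Fintype.card ι - 1) * δ) * ∑ i, ‖c i‖ ^ 2 ≤ ‖∑ i, c i • ψ i‖ ^ 2 := by
  classical
  set g : ι → ι → 𝕜 := fun i j => starRingEnd 𝕜 (c i) * c j * ⟪ψ i, ψ j⟫_𝕜
  have hexpand : ‖∑ i, c i • ψ i‖ ^ 2 = ∑ i, ∑ j, RCLike.re (g i j) := by
    rw [@norm_sq_eq_re_inner 𝕜, sum_inner, map_sum]
    simp only [inner_sum, inner_smul_left, inner_smul_right, map_sum, g]
    exact sum_congr rfl fun i _ => sum_congr rfl fun j _ => by ring_nf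
  -- Each Gram term is bounded below by `(1 + δ) [i = j] |cᵢ|² - δ |cᵢ| |cⱼ|`; the sum of the
  -- second part is controlled by `(∑ |cᵢ|)² ≤ N ∑ |cᵢ|²`.
  have hterm : ∀ i j, (if i = j then (1 + δ) * ‖c i‖ ^ 2 else 0) - δ * (‖c i‖ * ‖c j‖)
      ≤ RCLike.re (g i j) := by
    intro i j
    rcases eq_or_ne i j with rfl | hij
    · have hgii : RCLike.re (g i i) = ‖c i‖ ^ 2 := by
        simp [g, inner_self_eq_norm_sq_to_K, hψ, RCLike.conj_mul]
      rw [if_pos rfl, hgii]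
      linarith
    · have hg : ‖g i j‖ ≤ δ * (‖c i‖ * ‖c j‖) := by
        simp only [g, norm_mul, RCLike.norm_conj]
        nlinarith [hoff i j hij, mul_nonneg (norm_nonneg (c i)) (norm_nonneg (c j))]
      rw [if_neg hij]
      linarith [neg_abs_le (RCLike.re (g i j)), RCLike.abs_re_le_norm (g i j)]
  have hcs := sq_sum_le_card_mul_sum_sq (s := univ) (f := fun i => ‖c i‖)
  rw [card_univ] at hcs
  calc (1 - (Fintype.card ι - 1) * δ) * ∑ i, ‖c i‖ ^ 2
      ≤ (1 + δ) * ∑ i, ‖c i‖ ^ 2 - δ * (∑ i, ‖c i‖) ^ 2 := by nlinarith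
    _ = ∑ i, ∑ j, ((if i = j then (1 + δ) * ‖c i‖ ^ 2 else 0) - δ * (‖c i‖ * ‖c j‖)) := by
        simp only [sum_sub_distrib, sum_ite_eq, mem_univ, if_true, ← mul_sum, sq, sum_mul_sum]
    _ ≤ ∑ i, ∑ j, RCLike.re (g i j) := sum_le_sum fun i _ => sum_le_sum fun j _ => hterm i j
    _ = ‖∑ i, c i • ψ i‖ ^ 2 := hexpand.symm

lemma eigenvalue_mul_norm_sq_eq (ψ : ι → E)
    (hv : (∑ i, rankOne 𝕜 (ψ i) (ψ i)) v = (μ : 𝕜) • v) :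
    μ * ‖v‖ ^ 2 = ∑ i, ‖⟪ψ i, v⟫_𝕜‖ ^ 2 := by
  have h := inner_sum_rankOne_self_apply (𝕜 := 𝕜) ψ v
  rw [hv, inner_smul_right, inner_self_eq_norm_sq_to_K] at h
  exact_mod_cast h

lemma eigenvalue_le_of_rankOne_close (he : Orthonormal 𝕜 e)
    (hclose : ∀ i, ‖rankOne 𝕜 (ψ i) (ψ i) - rankOne 𝕜 (e i) (e i)‖ ≤ ε) (hv0 : v ≠ 0)
    (hv : (∑ i, rankOne 𝕜 (ψ i) (ψ i)) v = (μ : 𝕜) • v) :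
    μ ≤ 1 + Fintype.card ι * ε := by
  have h := sum_norm_inner_sq_le he hclose v
  rw [← eigenvalue_mul_norm_sq_eq ψ hv] at h
  exact le_of_mul_le_mul_right h (by positivity)

lemma le_eigenvalue_of_rankOne_close (hψ : ∀ i, ‖ψ i‖ = 1) (he : Orthonormal 𝕜 e)
    (hε : 0 ≤ ε) (hclose : ∀ i, ‖rankOne 𝕜 (ψ i) (ψ i) - rankOne 𝕜 (e i) (e i)‖ ≤ ε)
    (hv0 : v ≠ 0) (hv : (∑ i, rankOne 𝕜 (ψ i) (ψ i)) v = (μ : 𝕜) • v) (hμ : μ ≠ 0) :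
    1 - 2 * (Fintype.card ι - 1) * ε ≤ μ := by
  have hsum := eigenvalue_mul_norm_sq_eq ψ hv
  have hvpos : 0 < ‖v‖ ^ 2 := by positivity
  have hμpos : 0 < μ := by
    refine lt_of_le_of_ne (nonneg_of_mul_nonneg_left ?_ hvpos) hμ.symm
    rw [hsum]; positivity
  have hWv : ∑ i, ⟪ψ i, v⟫_𝕜 • ψ i = (μ : 𝕜) • v := by
    simpa only [_root_.sum_apply, rankOne_apply] using hv
  have hriesz := sum_norm_sq_le_norm_sum_smul_sq hψ (by positivity : 0 ≤ 2 * ε)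
    (fun i j hij => norm_inner_le_of_rankOne_close hψ he hclose hij) (fun i => ⟪ψ i, v⟫_𝕜)
  rw [hWv, norm_smul, RCLike.norm_ofReal, mul_pow, sq_abs, ← hsum] at hriesz
  calc 1 - 2 * (Fintype.card ι - 1) * ε = 1 - (Fintype.card ι - 1) * (2 * ε) := by ring
    _ ≤ μ := le_of_mul_le_mul_right (hriesz.trans_eq (by ring)) (by positivity)

end Frame

lemma Matrix.toEuclideanLin_vecMulVec_star {n : Type*} [Fintype n] [DecidableEq n]
    (x y : n → 𝕜) :
    toEuclideanLin (vecMulVec x (star y))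
      = (rankOne 𝕜 (WithLp.toLp 2 x) (WithLp.toLp 2 y) : EuclideanSpace 𝕜 n →L[𝕜] _) := by
  rw [← symm_toEuclideanLin_rankOne, LinearEquiv.apply_symm_apply]

lemma EuclideanSpace.norm_toLp_eq_one {n : Type*} [Fintype n] {x : n → 𝕜}
    (hx : star x ⬝ᵥ x = 1) : ‖WithLp.toLp 2 x‖ = 1 := by
  rw [@norm_eq_sqrt_re_inner 𝕜, EuclideanSpace.inner_toLp_toLp, dotProduct_comm, hx,
    RCLike.one_re, Real.sqrt_one]

lemma iSup_div_sInf_pos_le (f : ι → ℝ) {m M : ℝ} (hm : 0 < m) (hM : 0 ≤ M)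
    (hle : ∀ i, f i ≤ M) (hge : ∀ i, 0 < f i → m ≤ f i) :
    (⨆ i, f i) / sInf {x | 0 < x ∧ ∃ i, f i = x} ≤ M / m := by
  rcases Set.eq_empty_or_nonempty {x | 0 < x ∧ ∃ i, f i = x} with hS | hS
  · rw [hS, Real.sInf_empty, div_zero]
    positivity
  · refine div_le_div₀ hM (Real.iSup_le hle hM) hm (le_csInf hS ?_)
    rintro _ ⟨hx, i, rfl⟩
    exact hge i hx

theorem stmt_7_general {d N : ℕ} (ε : ℝ) (hε : 0 ≤ ε)
    (hNε : (N : ℝ) ^ 2 * ε < 1)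
    (ψ e : Fin N → (Fin d → ℂ))
    (hψ : ∀ i, star (ψ i) ⬝ᵥ ψ i = 1)
    (he : ∀ i j, star (e i) ⬝ᵥ e j = if i = j then 1 else 0)
    -- `‖ψᵢψᵢ* − eᵢeᵢ*‖ ≤ ε` in the ℓ² → ℓ² operator norm
    (hclose : ∀ i, ∀ u : EuclideanSpace ℂ (Fin d),
      ‖Matrix.toEuclideanLin
          (Matrix.vecMulVec (ψ i) (star (ψ i)) - Matrix.vecMulVec (e i) (star (e i))) u‖
        ≤ ε * ‖u‖)
    (W : Matrix (Fin d) (Fin d) ℂ)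
    (hW : W = ∑ i, Matrix.vecMulVec (ψ i) (star (ψ i))) (hWh : W.IsHermitian) :
    (∀ i, hWh.eigenvalues i ≤ 1 + N * ε) ∧
    (∀ i, hWh.eigenvalues i ≠ 0 → 1 - (N : ℝ) ^ 2 * ε ≤ hWh.eigenvalues i) ∧
    (⨆ i, hWh.eigenvalues i) / sInf {x : ℝ | 0 < x ∧ ∃ i, hWh.eigenvalues i = x}
      ≤ (1 + N * ε) / (1 - (N : ℝ) ^ 2 * ε) ∧
    (ε = 1 / (2 * (N : ℝ) ^ 2) →
      (⨆ i, hWh.eigenvalues i) / sInf {x : ℝ | 0 < x ∧ ∃ i, hWh.eigenvalues i = x} ≤ 3) := by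
  set ψ' : Fin N → EuclideanSpace ℂ (Fin d) := fun i => WithLp.toLp 2 (ψ i)
  set e' : Fin N → EuclideanSpace ℂ (Fin d) := fun i => WithLp.toLp 2 (e i)
  have hψ' : ∀ i, ‖ψ' i‖ = 1 := fun i => EuclideanSpace.norm_toLp_eq_one (hψ i)
  have he' : Orthonormal ℂ e' := orthonormal_iff_ite.2 fun i j => by
    rw [EuclideanSpace.inner_toLp_toLp, dotProduct_comm, he]
  have hclose' : ∀ i, ‖rankOne ℂ (ψ' i) (ψ' i) - rankOne ℂ (e' i) (e' i)‖ ≤ ε := fun i =>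
    ContinuousLinearMap.opNorm_le_bound _ hε fun u => by
      simpa [toEuclideanLin_vecMulVec_star] using hclose i u
  have heig : ∀ k, (∑ i, rankOne ℂ (ψ' i) (ψ' i)) (hWh.eigenvectorBasis k)
      = (hWh.eigenvalues k : ℂ) • hWh.eigenvectorBasis k := fun k => by
    have hT : toEuclideanLin W = ∑ i, (rankOne ℂ (ψ' i) (ψ' i) : _ →ₗ[ℂ] _) := by
      simp only [hW, map_sum, toEuclideanLin_vecMulVec_star, ψ']
    have h := congrArg (WithLp.toLp 2) (hWh.mulVec_eigenvectorBasis k)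
    rw [← toLpLin_apply, hT] at h
    simpa [Complex.coe_smul] using h
  have hbounds : ∀ k, hWh.eigenvalues k ≤ 1 + N * ε ∧
      (hWh.eigenvalues k ≠ 0 → 1 - (N : ℝ) ^ 2 * ε ≤ hWh.eigenvalues k) := fun k => by
    have hv0 := hWh.eigenvectorBasis.orthonormal.ne_zero k
    refine ⟨(eigenvalue_le_of_rankOne_close he' hclose' hv0 (heig k)).trans_eq
        (by rw [Fintype.card_fin]),
      fun hk => le_trans ?_ (le_eigenvalue_of_rankOne_close hψ' he' hε hclose' hv0 (heig k) hk)⟩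
    rw [Fintype.card_fin]
    nlinarith [sq_nonneg ((N : ℝ) - 1)]
  have hratio := iSup_div_sInf_pos_le hWh.eigenvalues (sub_pos.2 hNε) (by positivity)
    (fun k => (hbounds k).1) (fun k hk => (hbounds k).2 hk.ne')
  refine ⟨fun k => (hbounds k).1, fun k => (hbounds k).2, hratio, ?_⟩
  rintro rfl
  refine hratio.trans ((div_le_iff₀ (sub_pos.2 hNε)).2 ?_)
  rcases eq_or_ne N 0 with rfl | hN0
  · norm_num
  · have : (1 : ℝ) ≤ N := Nat.one_le_cast.2 (Nat.one_le_iff_ne_zero.2 hN0)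
    field_simp
    linarith

theorem stmt_7 {d N : ℕ} (hN : 2 ≤ N) (ε : ℝ) (hε : 0 ≤ ε)
    (hNε : (N : ℝ) ^ 2 * ε < 1)
    (ψ e : Fin N → (Fin d → ℂ))
    (hψ : ∀ i, star (ψ i) ⬝ᵥ ψ i = 1)
    (he : ∀ i j, star (e i) ⬝ᵥ e j = if i = j then 1 else 0)
    -- `‖ψᵢψᵢ* − eᵢeᵢ*‖ ≤ ε` in the ℓ² → ℓ² operator norm
    (hclose : ∀ i, ∀ u : EuclideanSpace ℂ (Fin d),
      ‖Matrix.toEuclideanLin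
          (Matrix.vecMulVec (ψ i) (star (ψ i)) - Matrix.vecMulVec (e i) (star (e i))) u‖
        ≤ ε * ‖u‖)
    (W : Matrix (Fin d) (Fin d) ℂ)
    (hW : W = ∑ i, Matrix.vecMulVec (ψ i) (star (ψ i))) (hWh : W.IsHermitian) :
    (∀ i, hWh.eigenvalues i ≤ 1 + N * ε) ∧
    (∀ i, hWh.eigenvalues i ≠ 0 → 1 - (N : ℝ) ^ 2 * ε ≤ hWh.eigenvalues i) ∧
    (⨆ i, hWh.eigenvalues i) / sInf {x : ℝ | 0 < x ∧ ∃ i, hWh.eigenvalues i = x}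
      ≤ (1 + N * ε) / (1 - (N : ℝ) ^ 2 * ε) ∧
    (ε = 1 / (2 * (N : ℝ) ^ 2) →
      (⨆ i, hWh.eigenvalues i) / sInf {x : ℝ | 0 < x ∧ ∃ i, hWh.eigenvalues i = x} ≤ 3) :=
  stmt_7_general ε hε hNε ψ e hψ he hclose W hW hWh
end

section
/- Let N ≥ 2 and let ψ_1, …, ψ_N be unit vectors in ℂ^d with c := max_{i≠j} |⟨ψ_i, ψ_j⟩| satisfying 0 < c < 1. Let δ ∈ (0,1) and let k ∈ ℕ satisfy k ≥ log((N−1)/δ) / (−log c). Then the N×N matrix G⁽ᵏ⁾ with entries G⁽ᵏ⁾_{ij} := ⟨ψ_i, ψ_j⟩^k is Hermitian, every eigenvalue λ of G⁽ᵏ⁾ satisfies 1 − δ ≤ λ ≤ 1 + δ, and in particular G⁽ᵏ⁾ is positive definite. -/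
open Matrix
open scoped ComplexOrder

/-!
Entrywise, `G⁽ᵏ⁾` has ones on the diagonal and off-diagonal entries of modulus at most `c ^ k`,
and the choice of `k` makes `c ^ k ≤ δ / (N - 1)`. Every Gershgorin disc is therefore centred at
`1` with radius at most `δ`; since the eigenvalues of a Hermitian matrix are real, they lie in
`[1 - δ, 1 + δ]`, and `δ < 1` makes them positive.
-/

open Finset Real

theorem Matrix.isHermitian_of_star_dotProduct_pow {ι n α : Type*} [Fintype n] [CommRing α]
    [StarRing α] (ψ : ι → n → α) (k : ℕ) :
    (of fun i j => (star (ψ i) ⬝ᵥ ψ j) ^ k).IsHermitian := by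
  ext i j
  rw [conjTranspose_apply, of_apply, of_apply, star_pow, star_dotProduct, star_star]

theorem Matrix.IsHermitian.hasEigenvalue_toLin'_eigenvalues {𝕜 n : Type*} [RCLike 𝕜] [Fintype n]
    [DecidableEq n] {A : Matrix n n 𝕜} (hA : A.IsHermitian) (i : n) :
    Module.End.HasEigenvalue (toLin' A) (hA.eigenvalues i : 𝕜) := by
  have := spectrum.algebraMap_mem 𝕜 (hA.eigenvalues_mem_spectrum_real i)
  rw [← spectrum_toLin'] at this
  exact Module.End.hasEigenvalue_iff_mem_spectrum.mpr this

theorem Matrix.IsHermitian.abs_eigenvalues_sub_le {𝕜 n : Type*} [RCLike 𝕜] [Fintype n]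
    [DecidableEq n] {A : Matrix n n 𝕜} (hA : A.IsHermitian) {a r : ℝ}
    (hdiag : ∀ i, A i i = (a : 𝕜)) (hrow : ∀ i, ∑ j ∈ univ.erase i, ‖A i j‖ ≤ r) (i : n) :
    |hA.eigenvalues i - a| ≤ r := by
  obtain ⟨l, hl⟩ := eigenvalue_mem_ball (hA.hasEigenvalue_toLin'_eigenvalues i)
  rw [Metric.mem_closedBall, hdiag, dist_eq_norm, ← RCLike.ofReal_sub, RCLike.norm_ofReal] at hl
  exact hl.trans (hrow l)

theorem Matrix.sum_erase_norm_le_of_offDiag_le {K n : Type*} [Norm K] [Fintype n]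
    [DecidableEq n] {A : Matrix n n K} {b : ℝ} (h : ∀ i j, i ≠ j → ‖A i j‖ ≤ b) (i : n) :
    ∑ j ∈ univ.erase i, ‖A i j‖ ≤ ((Fintype.card n : ℝ) - 1) * b := by
  have hcard : ((univ.erase i).card : ℝ) = Fintype.card n - 1 := by
    rw [card_erase_of_mem (mem_univ i), card_univ, Nat.cast_sub (Fintype.card_pos_iff.2 ⟨i⟩),
      Nat.cast_one]
  rw [← hcard, ← nsmul_eq_mul]
  exact sum_le_card_nsmul _ _ _ fun j hj => h i j (ne_of_mem_erase hj).symm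

theorem Real.pow_le_inv_of_log_div_neg_log_le {c x : ℝ} {k : ℕ} (hc0 : 0 < c) (hc1 : c < 1)
    (hx : 0 < x) (hk : log x / -log c ≤ k) : c ^ k ≤ x⁻¹ := by
  rw [div_le_iff₀ (neg_pos.2 (log_neg hc0 hc1))] at hk
  rw [← exp_log (pow_pos hc0 k), ← exp_log (inv_pos.2 hx), log_pow, log_inv]
  exact exp_le_exp.2 (by linarith)

theorem stmt_8 {d N : ℕ} (hN : 2 ≤ N) (ψ : Fin N → (Fin d → ℂ))
    (hψ : ∀ i, star (ψ i) ⬝ᵥ ψ i = 1)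
    (c : ℝ)
    (hc : c = ⨆ p : {p : Fin N × Fin N // p.1 ≠ p.2}, ‖star (ψ p.1.1) ⬝ᵥ ψ p.1.2‖)
    (hc0 : 0 < c) (hc1 : c < 1)
    (δ : ℝ) (hδ : δ ∈ Set.Ioo (0 : ℝ) 1)
    (k : ℕ) (hk : Real.log (((N : ℝ) - 1) / δ) / (-Real.log c) ≤ (k : ℝ))
    (Gk : Matrix (Fin N) (Fin N) ℂ)
    (hGk : ∀ i j, Gk i j = (star (ψ i) ⬝ᵥ ψ j) ^ k) :
    ∃ hH : Gk.IsHermitian,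
      (∀ i, 1 - δ ≤ hH.eigenvalues i ∧ hH.eigenvalues i ≤ 1 + δ) ∧ Gk.PosDef := by
  obtain ⟨hδ0, hδ1⟩ := hδ
  have hN1 : (0 : ℝ) < N - 1 := by
    have : (2 : ℝ) ≤ N := by exact_mod_cast hN
    linarith
  have hH : Gk.IsHermitian := by
    convert isHermitian_of_star_dotProduct_pow ψ k
    exact ext hGk
  have hoff : ∀ i j, i ≠ j → ‖Gk i j‖ ≤ c ^ k := fun i j hij => by
    rw [hGk, norm_pow, hc]
    gcongr
    exact le_ciSup (f := fun p : {p : Fin N × Fin N // p.1 ≠ p.2} => ‖star (ψ p.1.1) ⬝ᵥ ψ p.1.2‖)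
      (Set.finite_range _).bddAbove ⟨(i, j), hij⟩
  have hck : c ^ k ≤ δ / (N - 1) := by
    simpa using pow_le_inv_of_log_div_neg_log_le hc0 hc1 (div_pos hN1 hδ0) hk
  have hrow (i : Fin N) : ∑ j ∈ univ.erase i, ‖Gk i j‖ ≤ δ := calc
    _ ≤ ((N : ℝ) - 1) * c ^ k := by simpa using sum_erase_norm_le_of_offDiag_le hoff i
    _ ≤ ((N : ℝ) - 1) * (δ / (N - 1)) := by gcongr
    _ = δ := by field_simp
  have hspec i :=
    abs_le.1 (hH.abs_eigenvalues_sub_le (a := 1) (fun i => by simp [hGk, hψ]) hrow i)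
  refine ⟨hH, fun i => ⟨by linarith [hspec i], by linarith [hspec i]⟩,
    hH.posDef_iff_eigenvalues_pos.2 fun i => by linarith [hspec i]⟩
end

section
/- Let c ∈ (0,1), let N ∈ ℕ with N ≥ 2, and let m be a positive real number. Suppose that for every integer K ≥ 2 and every real A > 0 with K^A ≥ N, one has (1/N)·(1 − √(1 − c^{2AKm})) ≤ K^{−A}. Then m ≥ (log 3 / 3) · 1/(−log(c²)). -/
theorem stmt_11 (c : ℝ) (hc : c ∈ Set.Ioo (0 : ℝ) 1)
    (N : ℕ) (hN : 2 ≤ N) (m : ℝ) (hm : 0 < m)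
    (h : ∀ K : ℕ, 2 ≤ K → ∀ A : ℝ, 0 < A → (N : ℝ) ≤ (K : ℝ) ^ A →
      1 / (N : ℝ) * (1 - Real.sqrt (1 - c ^ (2 * A * (K : ℝ) * m)))
        ≤ (K : ℝ) ^ (-A)) :
    Real.log 3 / 3 * (1 / (-Real.log (c ^ 2))) ≤ m := by
  obtain ⟨hc0, hc1⟩ := hc
  set lc : ℝ := -Real.log c with hlc_def
  have hlc : 0 < lc := by
    have := Real.log_neg hc0 hc1
    simp [hlc_def]; linarith
  have hN0 : (0:ℝ) < N := by positivity
  have hN2 : (2:ℝ) ≤ N := by exact_mod_cast hN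
  have hlog3 : 0 < Real.log 3 := Real.log_pos (by norm_num)
  have hlog2N : 0 < Real.log (2 * N) := Real.log_pos (by linarith)
  -- key estimate for each admissible A
  have key : ∀ A : ℝ, 0 < A → (N:ℝ) ≤ (3:ℝ) ^ A →
      Real.log 3 / (6 * lc) - Real.log (2 * N) / (6 * A * lc) ≤ m := by
    intro A hA hNA
    have h3A : (0:ℝ) < (3:ℝ) ^ A := Real.rpow_pos_of_pos (by norm_num) A
    have hh := h 3 (by norm_num) A hA (by push_cast; exact hNA)
    push_cast at hh
    set x : ℝ := c ^ (2 * A * 3 * m) with hx_def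
    have hx0 : 0 < x := Real.rpow_pos_of_pos hc0 _
    have hx1 : x ≤ 1 := Real.rpow_le_one hc0.le hc1.le (by positivity)
    set t : ℝ := (N:ℝ) * (3:ℝ) ^ (-A) with ht_def
    have ht0 : 0 < t := by positivity
    have h3negA : (3:ℝ) ^ (-A) = ((3:ℝ) ^ A)⁻¹ := by
      rw [Real.rpow_neg (by norm_num)]
    have ht1 : t ≤ 1 := by
      rw [ht_def, h3negA]
      rw [mul_inv_le_iff₀ h3A]
      simpa using hNA
    have h1 : 1 - Real.sqrt (1 - x) ≤ t := by
      have := hh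
      rw [div_mul_eq_mul_div, div_le_iff₀ hN0] at this
      calc 1 - Real.sqrt (1 - x) ≤ (3:ℝ) ^ (-A) * N := by linarith
        _ = t := by rw [ht_def]; ring
    have hsq : Real.sqrt (1 - x) ^ 2 = 1 - x := Real.sq_sqrt (by linarith)
    have hst : 1 - t ≤ Real.sqrt (1 - x) := by linarith
    have hxt : x ≤ 2 * t := by nlinarith [Real.sqrt_nonneg (1 - x)]
    have hlog : Real.log x ≤ Real.log (2 * t) :=
      Real.log_le_log hx0 hxt
    have hlogx : Real.log x = (2 * A * 3 * m) * Real.log c :=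
      Real.log_rpow hc0 _
    have hlogt : Real.log (2 * t) = Real.log (2 * N) - A * Real.log 3 := by
      rw [ht_def, show (2:ℝ) * ((N:ℝ) * (3:ℝ) ^ (-A)) = (2 * N) * (3:ℝ) ^ (-A) by ring,
        Real.log_mul (by positivity) (by positivity), Real.log_rpow (by norm_num)]
      ring
    have hineq : A * Real.log 3 - Real.log (2 * N) ≤ 6 * A * m * lc := by
      rw [hlogx, hlogt] at hlog
      simp only [hlc_def]
      nlinarith
    have hdiv : (A * Real.log 3 - Real.log (2 * N)) / (6 * A * lc) ≤ m := by
      rw [div_le_iff₀ (by positivity)]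
      nlinarith
    calc Real.log 3 / (6 * lc) - Real.log (2 * N) / (6 * A * lc)
        = (A * Real.log 3 - Real.log (2 * N)) / (6 * A * lc) := by
          field_simp
      _ ≤ m := hdiv
  -- rewrite the goal
  have goal_eq : Real.log 3 / 3 * (1 / (-Real.log (c ^ 2))) = Real.log 3 / (6 * lc) := by
    rw [Real.log_pow]
    push_cast
    rw [hlc_def]
    field_simp
    ring
  rw [goal_eq]
  refine le_of_forall_sub_le ?_
  intro ε hε
  set A : ℝ := max (Real.log N / Real.log 3 + 1) (Real.log (2 * N) / (6 * ε * lc)) with hA_def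
  have hlogN : 0 < Real.log N := Real.log_pos (by linarith)
  have hA1 : Real.log N / Real.log 3 + 1 ≤ A := le_max_left _ _
  have hA2 : Real.log (2 * N) / (6 * ε * lc) ≤ A := le_max_right _ _
  have hApos : 0 < A := by
    have : (0:ℝ) < Real.log N / Real.log 3 + 1 := by positivity
    linarith
  have hNA : (N:ℝ) ≤ (3:ℝ) ^ A := by
    rw [Real.rpow_def_of_pos (by norm_num)]
    have h1 : Real.log N ≤ Real.log 3 * A := by
      rw [mul_comm, ← div_le_iff₀ hlog3] at *
      linarith
    calc (N:ℝ) = Real.exp (Real.log N) := (Real.exp_log hN0).symm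
      _ ≤ Real.exp (Real.log 3 * A) := Real.exp_le_exp.mpr h1
  have hεA : Real.log (2 * N) / (6 * A * lc) ≤ ε := by
    rw [div_le_iff₀ (by positivity)]
    rw [div_le_iff₀ (by positivity)] at hA2
    nlinarith
  have := key A hApos hNA
  linarith
end

section
/- Let c ∈ (0,1), let N ∈ ℕ with N ≥ 2, let ε be a real number with 0 ≤ ε ≤ 3/7, set θ := 1/2 − 7ε/6, and let m be a positive real number. Suppose that for every real A > 0, one has (1/N)·(1 − √(1 − c^{14Am})) ≤ 2·exp(−A·θ²). Then m ≥ θ² / (−7·log(c²)). -/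
/-!
Put `x = c ^ (14 A m)`. Since `1 - √(1 - x) ≥ x / 2`, the hypothesis gives
`x ≤ 4 N exp (-A θ²)`, and taking logarithms `A (θ² + 14 m log c) ≤ log (4 N)` for every `A > 0`.
A linear function of `A` bounded above on `(0, ∞)` has nonpositive slope, so
`θ² ≤ -14 m log c = -7 m log (c²)`.
-/

open Real

lemma half_le_one_sub_sqrt_one_sub {x : ℝ} (hx : x ≤ 2) : x / 2 ≤ 1 - √(1 - x) := by
  have : √(1 - x) ≤ 1 - x / 2 :=
    sqrt_le_iff.mpr ⟨by linarith, by nlinarith [sq_nonneg x]⟩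
  linarith

lemma nonpos_of_forall_pos_mul_le {t C : ℝ} (h : ∀ A : ℝ, 0 < A → A * t ≤ C) : t ≤ 0 := by
  by_contra! ht
  have hC := h ((|C| + 1) / t) (by positivity)
  rw [div_mul_cancel₀ _ ht.ne'] at hC
  linarith [le_abs_self C]

theorem stmt_13_general (c : ℝ) (hc : c ∈ Set.Ioo (0 : ℝ) 1)
    (N : ℕ) (hN : 2 ≤ N)
    (θ : ℝ) (m : ℝ) (hm : 0 < m)
    (h : ∀ A : ℝ, 0 < A →
      1 / (N : ℝ) * (1 - Real.sqrt (1 - c ^ (14 * A * m)))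
        ≤ 2 * Real.exp (-A * θ ^ 2)) :
    θ ^ 2 / (-7 * Real.log (c ^ 2)) ≤ m := by
  obtain ⟨hc0, hc1⟩ := hc
  have hNpos : (0 : ℝ) < N := by exact_mod_cast (by omega : 0 < N)
  have hlog : log c < 0 := log_neg hc0 hc1
  have hslope : ∀ A : ℝ, 0 < A → A * (θ ^ 2 + 14 * m * log c) ≤ log (4 * N) := by
    intro A hA
    have hx1 : c ^ (14 * A * m) ≤ 1 := rpow_le_one hc0.le hc1.le (by positivity)
    have hx : c ^ (14 * A * m) ≤ 4 * N * exp (-A * θ ^ 2) :=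
      calc c ^ (14 * A * m) = 2 * N * (1 / N * (c ^ (14 * A * m) / 2)) := by field_simp
        _ ≤ 2 * N * (1 / N * (1 - √(1 - c ^ (14 * A * m)))) := by
          gcongr; exact half_le_one_sub_sqrt_one_sub (by linarith)
        _ ≤ 2 * N * (2 * exp (-A * θ ^ 2)) := mul_le_mul_of_nonneg_left (h A hA) (by positivity)
        _ = 4 * N * exp (-A * θ ^ 2) := by ring
    rw [← log_le_log_iff (by positivity) (by positivity), log_rpow hc0, log_mul (by positivity)
      (exp_pos _).ne', log_exp] at hx
    linarith
  have hslope_nonpos := nonpos_of_forall_pos_mul_le hslope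
  rw [log_pow, div_le_iff₀ (by push_cast; linarith)]
  push_cast
  linarith

theorem stmt_13 (c : ℝ) (hc : c ∈ Set.Ioo (0 : ℝ) 1)
    (N : ℕ) (hN : 2 ≤ N) (ε : ℝ) (hε0 : 0 ≤ ε) (hε1 : ε ≤ 3 / 7)
    (θ : ℝ) (hθ : θ = 1 / 2 - 7 * ε / 6) (m : ℝ) (hm : 0 < m)
    (h : ∀ A : ℝ, 0 < A →
      1 / (N : ℝ) * (1 - Real.sqrt (1 - c ^ (14 * A * m)))
        ≤ 2 * Real.exp (-A * θ ^ 2)) :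
    θ ^ 2 / (-7 * Real.log (c ^ 2)) ≤ m :=
  stmt_13_general c hc N hN θ m hm h
end
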